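/- Let v₁, …, v₄ ∈ ℝ³ with det B_K > 0, let K = F_K(K̂), and let P, Q : ℝ³ → ℝ be continuously differentiable (in the application, pushed-forward polynomial basis functions P^K = P ∘ F_K^{−1}, Q^K = Q ∘ F_K^{−1}). Then for each ★ ∈ {x, y, z}, ∫_K P^K ∂_★ Q^K = Σ_{# ∈ {x,y,z}} a_{★#} ∫_{K̂} P ∂_{#} Q, where [a_{★#}] = det(B_K) B_K^{−⊤} and ∂_★ denotes the partial derivative in the ★ coordinate direction. -/

import Mathlib

/-!
Pull the integral over `K` back to `K̂` along the affine bijection `F_K`, which contributes the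
Jacobian factor `|det B_K|`. Since `Q^K = Q ∘ F_K⁻¹` everywhere, the chain rule gives
`(∂_★ Q^K) ∘ F_K = DQ (B_K⁻¹ e_★) = Σ_# (B_K⁻¹)_{#★} ∂_# Q`, and linearity of the integral
turns this into the matrix `|det B_K| B_K^{−⊤}`.
-/

open Matrix MeasureTheory

/-- `B_K`: the 3×3 matrix whose columns are `v₂ − v₁`, `v₃ − v₁`, `v₄ − v₁`. -/
noncomputable def Bmat (v : Fin 4 → Fin 3 → ℝ) : Matrix (Fin 3) (Fin 3) ℝ :=
  Matrix.of fun i j => v j.succ i - v 0 i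

/-- `F_K`: the affine map `x̂ ↦ B_K x̂ + v₁`. -/
noncomputable def FK (v : Fin 4 → Fin 3 → ℝ) (x : Fin 3 → ℝ) : Fin 3 → ℝ :=
  (Bmat v).mulVec x + v 0

/-- The reference tetrahedron `K̂ = {(x,y,z) : x, y, z ≥ 0, x + y + z ≤ 1}`. -/
def refTet : Set (Fin 3 → ℝ) :=
  {x | 0 ≤ x 0 ∧ 0 ≤ x 1 ∧ 0 ≤ x 2 ∧ x 0 + x 1 + x 2 ≤ 1}

section AffineChangeOfVariables

variable {E : Type*} [NormedAddCommGroup E] [NormedSpace ℝ E]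

theorem fderiv_eq_comp_symm_of_comp_affine_eq {G : Type*} [NormedAddCommGroup G] [NormedSpace ℝ G]
    (e : E ≃L[ℝ] E) (c : E) {f g : E → G} (hfg : ∀ x, g (e x + c) = f x) (x : E) :
    fderiv ℝ g (e x + c) = (fderiv ℝ f x).comp (e.symm : E →L[ℝ] E) := by
  have hg : g = fun y => (f ∘ e.symm) (y - c) := by
    funext y
    rw [Function.comp_apply, ← hfg, ContinuousLinearEquiv.apply_symm_apply, sub_add_cancel]
  rw [hg, fderiv_comp_sub, add_sub_cancel_right, e.symm.comp_right_fderiv, e.symm_apply_apply]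

variable [FiniteDimensional ℝ E] [MeasurableSpace E] [BorelSpace E]
  (μ : Measure E) [μ.IsAddHaarMeasure]

theorem setIntegral_image_affine {G : Type*} [NormedAddCommGroup G] [NormedSpace ℝ G]
    (e : E ≃L[ℝ] E) (c : E) {s : Set E} (hs : MeasurableSet s) (f : E → G) :
    ∫ x in (fun x => e x + c) '' s, f x ∂μ =
      |(e : E →L[ℝ] E).det| • ∫ x in s, f (e x + c) ∂μ := by
  have hderiv : ∀ x ∈ s, HasFDerivWithinAt (fun x => e x + c) (e : E →L[ℝ] E) s x :=
    fun x _ => (e.hasFDerivAt.add_const c).hasFDerivWithinAt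
  have hinj : Set.InjOn (fun x => e x + c) s := fun x _ y _ h => e.injective (add_right_cancel h)
  rw [integral_image_eq_integral_abs_det_fderiv_smul μ hs hderiv hinj, integral_smul]

theorem setIntegral_image_affine_mul_fderiv (e : E ≃L[ℝ] E) (c : E) {s : Set E}
    (hs : MeasurableSet s) {P Q PK QK : E → ℝ}
    (hPK : ∀ x, PK (e x + c) = P x) (hQK : ∀ x, QK (e x + c) = Q x) (w : E) :
    ∫ x in (fun x => e x + c) '' s, PK x * fderiv ℝ QK x (e w) ∂μ =
      |(e : E →L[ℝ] E).det| * ∫ x in s, P x * fderiv ℝ Q x w ∂μ := by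
  rw [setIntegral_image_affine μ e c hs, smul_eq_mul]
  congr 2 with x
  rw [hPK, fderiv_eq_comp_symm_of_comp_affine_eq e c hQK x]
  simp

end AffineChangeOfVariables

theorem ContinuousLinearMap.apply_eq_sum_mul_apply_single {ι : Type*} [Fintype ι] [DecidableEq ι]
    (ℓ : (ι → ℝ) →L[ℝ] ℝ) (x : ι → ℝ) : ℓ x = ∑ j, x j * ℓ (Pi.single j 1) := by
  conv_lhs => rw [← Finset.univ_sum_single x]
  rw [map_sum]
  refine Finset.sum_congr rfl fun j _ => ?_
  rw [← smul_eq_mul, ← map_smul, ← Pi.single_smul', smul_eq_mul, mul_one]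

theorem setIntegral_image_mulVec_add_mul_fderiv {ι : Type*} [Fintype ι] [DecidableEq ι]
    (μ : Measure (ι → ℝ)) [μ.IsAddHaarMeasure] (A : Matrix ι ι ℝ) (hA : A.det ≠ 0) (c : ι → ℝ)
    {s : Set (ι → ℝ)} (hs : MeasurableSet s) {P Q PK QK : (ι → ℝ) → ℝ}
    (hPK : ∀ x, PK (A *ᵥ x + c) = P x) (hQK : ∀ x, QK (A *ᵥ x + c) = Q x)
    (hint : ∀ j, IntegrableOn (fun x => P x * fderiv ℝ Q x (Pi.single j 1)) s μ) (i : ι) :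
    ∫ x in (fun x => A *ᵥ x + c) '' s, PK x * fderiv ℝ QK x (Pi.single i 1) ∂μ =
      ∑ j, (|A.det| • A⁻¹ᵀ) i j * ∫ x in s, P x * fderiv ℝ Q x (Pi.single j 1) ∂μ := by
  let L : (ι → ℝ) →L[ℝ] (ι → ℝ) := LinearMap.toContinuousLinearMap (toLin' A)
  have hL : L.det = A.det := LinearMap.det_toLin' A
  let e := L.toContinuousLinearEquivOfDetNeZero (hL ▸ hA)
  have hsingle : Pi.single i 1 = e (A⁻¹ *ᵥ Pi.single i 1) := by
    change _ = A *ᵥ (A⁻¹ *ᵥ _)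
    rw [mulVec_mulVec, mul_nonsing_inv _ hA.isUnit, one_mulVec]
  have hexpand : ∀ x, fderiv ℝ Q x (A⁻¹ *ᵥ Pi.single i 1) =
      ∑ j, A⁻¹ j i * fderiv ℝ Q x (Pi.single j 1) := fun x => by
    rw [(fderiv ℝ Q x).apply_eq_sum_mul_apply_single, mulVec_single_one]
    rfl
  have himage : (fun x => A *ᵥ x + c) '' s = (fun x => e x + c) '' s := rfl
  rw [hsingle, himage, setIntegral_image_affine_mul_fderiv μ e c hs hPK hQK,
    ContinuousLinearMap.coe_toContinuousLinearEquivOfDetNeZero, hL]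
  simp_rw [hexpand, Finset.mul_sum, mul_left_comm (P _)]
  rw [integral_finsetSum _ fun j _ => (hint j).const_mul _, Finset.mul_sum]
  refine Finset.sum_congr rfl fun j _ => ?_
  rw [integral_const_mul, Matrix.smul_apply, transpose_apply, smul_eq_mul, mul_assoc]

theorem IsCompact.integrableOn_mul_fderiv_apply {E : Type*} [NormedAddCommGroup E]
    [NormedSpace ℝ E] [MeasurableSpace E] [OpensMeasurableSpace E] {μ : Measure E}
    [IsFiniteMeasureOnCompacts μ] {s : Set E} (hs : IsCompact s) {P Q : E → ℝ}
    (hP : Continuous P) (hQ : ContDiff ℝ 1 Q) (w : E) :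
    IntegrableOn (fun x => P x * fderiv ℝ Q x w) s μ :=
  (hP.mul ((hQ.continuous_fderiv one_ne_zero).clm_apply continuous_const)).continuousOn
    |>.integrableOn_compact hs

theorem isClosed_refTet : IsClosed refTet := by
  simp only [refTet, Set.ofPred_and]
  refine .inter (isClosed_le ?_ ?_) (.inter (isClosed_le ?_ ?_)
    (.inter (isClosed_le ?_ ?_) (isClosed_le ?_ ?_))) <;> fun_prop

theorem refTet_subset_Icc : refTet ⊆ Set.Icc 0 1 := by
  rintro x ⟨h0, h1, h2, hsum⟩
  refine ⟨fun i => ?_, fun i => ?_⟩ <;> fin_cases i <;> simp <;> linarith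

theorem isCompact_refTet : IsCompact refTet :=
  isCompact_Icc.of_isClosed_subset isClosed_refTet refTet_subset_Icc

theorem convection_matrix_change_of_variables_general (v : Fin 4 → Fin 3 → ℝ)
    (hdet : 0 < (Bmat v).det)
    (P Q PK QK : (Fin 3 → ℝ) → ℝ)
    (hP : ContDiff ℝ 1 P) (hQ : ContDiff ℝ 1 Q)
    (hcompP : ∀ x, PK (FK v x) = P x) (hcompQ : ∀ x, QK (FK v x) = Q x) :
    ∀ st : Fin 3,
      ∫ x in FK v '' refTet, PK x * fderiv ℝ QK x (Pi.single st 1) =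
        ∑ j : Fin 3, ((Bmat v).det • ((Bmat v)⁻¹)ᵀ) st j *
          ∫ y in refTet, P y * fderiv ℝ Q y (Pi.single j 1) := by
  intro st
  have hint (j : Fin 3) := isCompact_refTet.integrableOn_mul_fderiv_apply (μ := volume)
    hP.continuous hQ (Pi.single j 1)
  have h := setIntegral_image_mulVec_add_mul_fderiv volume (Bmat v) hdet.ne' (v 0)
    isClosed_refTet.measurableSet hcompP hcompQ hint st
  rwa [abs_of_pos hdet] at h

/-- For pushed-forward functions `P^K ∘ F_K = P`, `Q^K ∘ F_K = Q` (all continuously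
differentiable) on the tetrahedron `K = F_K(K̂)` with `det B_K > 0`, one has, for each
coordinate direction `★`, `∫_K P^K ∂_★ Q^K = Σ_{#} a_{★#} ∫_{K̂} P ∂_# Q`, where
`[a_{★#}] = det(B_K) B_K^{−⊤}`. -/
theorem convection_matrix_change_of_variables (v : Fin 4 → Fin 3 → ℝ)
    (hdet : 0 < (Bmat v).det)
    (P Q PK QK : (Fin 3 → ℝ) → ℝ)
    (hP : ContDiff ℝ 1 P) (hQ : ContDiff ℝ 1 Q)
    (hPK : ContDiff ℝ 1 PK) (hQK : ContDiff ℝ 1 QK)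
    (hcompP : ∀ x, PK (FK v x) = P x) (hcompQ : ∀ x, QK (FK v x) = Q x) :
    ∀ st : Fin 3,
      ∫ x in FK v '' refTet, PK x * fderiv ℝ QK x (Pi.single st 1) =
        ∑ j : Fin 3, ((Bmat v).det • ((Bmat v)⁻¹)ᵀ) st j *
          ∫ y in refTet, P y * fderiv ℝ Q y (Pi.single j 1) :=
  convection_matrix_change_of_variables_general v hdet P Q PK QK hP hQ hcompP hcompQ
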